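/- Let D be a strongly connected digraph belonging to the class 𝒟 and let M be a maximum matching of D. Then both endpoints of any alternating cycle chain of length three with respect to M are pendant vertices, and any alternating cycle chain of length one with respect to M is a pendant 2-cycle. -/

import Mathlib

open Matrix

/-- Adjacency in a digraph given by relation `G`: a 2-cycle between distinct `i` and `j`. -/
def Adjd {n : ℕ} (G : Fin n → Fin n → Prop) (i j : Fin n) : Prop :=
  i ≠ j ∧ G i j ∧ G j i

/-- `G` is a simple symmetric digraph: no loops and edges come in both directions. -/
def IsSSD {n : ℕ} (G : Fin n → Fin n → Prop) : Prop :=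
  (∀ i, ¬ G i i) ∧ ∀ i j, G i j → G j i

/-- A vertex is pendant if it is incident to exactly one 2-cycle. -/
def Pendant {n : ℕ} (G : Fin n → Fin n → Prop) (i : Fin n) : Prop :=
  ∃! j, Adjd G i j

/-- The class 𝒟: simple symmetric digraphs in which every non-pendant vertex is
adjacent to at least one pendant vertex. -/
def InClassD {n : ℕ} (G : Fin n → Fin n → Prop) : Prop :=
  IsSSD G ∧ ∀ i, ¬ Pendant G i → ∃ j, Adjd G i j ∧ Pendant G j

/-- Strong connectivity: a directed path from every vertex to every other vertex. -/
def StronglyConnected {n : ℕ} (G : Fin n → Fin n → Prop) : Prop :=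
  ∀ i j : Fin n, Relation.ReflTransGen G i j

/-- An unordered pair `e` is a 2-cycle of `G`. -/
def IsEdge {n : ℕ} (G : Fin n → Fin n → Prop) (e : Sym2 (Fin n)) : Prop :=
  ∃ i j, e = s(i, j) ∧ Adjd G i j

/-- A matching: a set of pairwise vertex-disjoint 2-cycles. -/
def IsMatching {n : ℕ} (G : Fin n → Fin n → Prop) (M : Finset (Sym2 (Fin n))) : Prop :=
  (∀ e ∈ M, IsEdge G e) ∧
  ∀ e ∈ M, ∀ f ∈ M, e ≠ f → ∀ v : Fin n, v ∈ e → v ∉ f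

/-- A maximum matching: a matching of maximum cardinality. -/
def IsMaxMatching {n : ℕ} (G : Fin n → Fin n → Prop) (M : Finset (Sym2 (Fin n))) : Prop :=
  IsMatching G M ∧ ∀ M', IsMatching G M' → M'.card ≤ M.card

/-- A cycle chain, recorded by its list of (distinct) vertices `i₁, …, i_{m+1}`. -/
def IsCycleChain {n : ℕ} (G : Fin n → Fin n → Prop) (c : List (Fin n)) : Prop :=
  c.Nodup ∧ 2 ≤ c.length ∧ c.Chain' (Adjd G)

/-- A cycle chain from `i` to `j`. -/
def IsCycleChainBtw {n : ℕ} (G : Fin n → Fin n → Prop) (i j : Fin n) (c : List (Fin n)) : Prop :=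
  IsCycleChain G c ∧ c.head? = some i ∧ c.getLast? = some j

/-- The list of 2-cycles of a cycle chain. -/
def chainEdges {n : ℕ} (c : List (Fin n)) : List (Sym2 (Fin n)) :=
  List.zipWith (fun a b => s(a, b)) c c.tail

/-- The cycle chain `c` is alternating with respect to `M`: its 2-cycles are alternately
in `M` and outside `M`, with the first and last 2-cycle in `M` (so its length is odd). -/
def IsAltChain {n : ℕ} (M : Finset (Sym2 (Fin n))) (c : List (Fin n)) : Prop :=
  Odd (chainEdges c).length ∧
  ∀ k (h : k < (chainEdges c).length), ((chainEdges c).get ⟨k, h⟩ ∈ M ↔ Even k)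

/-- The digraph of a square matrix: edge `(i,j)` iff `A i j ≠ 0`. -/
def DA {n : ℕ} (A : Matrix (Fin n) (Fin n) ℝ) : Fin n → Fin n → Prop :=
  fun i j => A i j ≠ 0

/-- The cycle product `a_{ij} a_{ji}` of a 2-cycle. -/
def cycProd {n : ℕ} (A : Matrix (Fin n) (Fin n) ℝ) (e : Sym2 (Fin n)) : ℝ :=
  Sym2.lift ⟨fun i j => A i j * A j i, fun i j => mul_comm _ _⟩ e

/-- The matching product η(M) of a matching `M`. -/
noncomputable def matchProd {n : ℕ} (A : Matrix (Fin n) (Fin n) ℝ)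
    (M : Finset (Sym2 (Fin n))) : ℝ :=
  ∏ e ∈ M, cycProd A e

/-- The (finite) collection of all maximum matchings of `D(A)`. -/
noncomputable def maxMatchings {n : ℕ} (A : Matrix (Fin n) (Fin n) ℝ) :
    Finset (Finset (Sym2 (Fin n))) :=
  {M | IsMaxMatching (DA A) M}.toFinite.toFinset

/-- Δ_A: the sum of the matching products over all maximum matchings of `D(A)`. -/
noncomputable def Delta {n : ℕ} (A : Matrix (Fin n) (Fin n) ℝ) : ℝ :=
  ∑ M ∈ maxMatchings A, matchProd A M

/-- 𝕄(i,j): maximum matchings with respect to which some cycle chain from `i` to `j`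
is an alternating cycle chain. -/
def MMset {n : ℕ} (A : Matrix (Fin n) (Fin n) ℝ) (i j : Fin n) :
    Set (Finset (Sym2 (Fin n))) :=
  {M | IsMaxMatching (DA A) M ∧ ∃ c, IsCycleChainBtw (DA A) i j c ∧ IsAltChain M c}

/-- `i` and `j` are maximally matchable: 𝕄(i,j) ≠ ∅. -/
def MaxMatchable {n : ℕ} (A : Matrix (Fin n) (Fin n) ℝ) (i j : Fin n) : Prop :=
  (MMset A i j).Nonempty

open scoped Classical in
/-- The (unique) alternating cycle chain from `i` to `j`, when it exists. -/
noncomputable def theChain {n : ℕ} (A : Matrix (Fin n) (Fin n) ℝ) (i j : Fin n) :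
    List (Fin n) :=
  if h : ∃ c, IsCycleChainBtw (DA A) i j c ∧ ∃ M ∈ MMset A i j, IsAltChain M c
  then h.choose else []

/-- The path product along a cycle chain: `a_{i₁ i₂} a_{i₂ i₃} ⋯ a_{i_m i_{m+1}}`. -/
def pathProd {n : ℕ} (A : Matrix (Fin n) (Fin n) ℝ) (c : List (Fin n)) : ℝ :=
  (List.zipWith (fun a b => A a b) c c.tail).prod

open scoped Classical in
/-- β_{ij} = (−1)^{(m−1)/2} P_m(i,j) for maximally matchable `i, j`, and `0` otherwise. -/
noncomputable def beta {n : ℕ} (A : Matrix (Fin n) (Fin n) ℝ) (i j : Fin n) : ℝ :=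
  if MaxMatchable A i j then
    (-1 : ℝ) ^ (((theChain A i j).length - 2) / 2) * pathProd A (theChain A i j)
  else 0

/-- β̄_{i,j}(M): product of the cycle products of the 2-cycles of `M` not contained in
the alternating cycle chain from `i` to `j`. -/
noncomputable def betaBar {n : ℕ} (A : Matrix (Fin n) (Fin n) ℝ) (i j : Fin n)
    (M : Finset (Sym2 (Fin n))) : ℝ :=
  ∏ e ∈ M.filter (fun e => e ∉ chainEdges (theChain A i j)), cycProd A e

/-- μ_{ij} = β_{ij} · Σ_{M ∈ 𝕄(i,j)} β̄_{i,j}(M). -/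
noncomputable def mu {n : ℕ} (A : Matrix (Fin n) (Fin n) ℝ) (i j : Fin n) : ℝ :=
  beta A i j * ∑ M ∈ (MMset A i j).toFinite.toFinset, betaBar A i j M

/-- `X` is a group inverse of `A`. -/
def IsGroupInverse {n : ℕ} (A X : Matrix (Fin n) (Fin n) ℝ) : Prop :=
  A * X * A = A ∧ X * A * X = X ∧ A * X = X * A

/-- A tree digraph: strongly connected and all of its cycles have length 2. -/
def IsTreeDigraph {n : ℕ} (G : Fin n → Fin n → Prop) : Prop :=
  StronglyConnected G ∧
  ∀ (a : Fin n) (l : List (Fin n)), (a :: l).Nodup → List.Chain G a l →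
    G ((a :: l).getLast (List.cons_ne_nil a l)) a → (a :: l).length = 2

/-- A star tree digraph: a tree digraph with a center adjacent to every other vertex,
every other vertex being adjacent only to the center. -/
def IsStarTree {n : ℕ} (G : Fin n → Fin n → Prop) : Prop :=
  IsTreeDigraph G ∧
  ∃ c : Fin n, (∀ j, j ≠ c → Adjd G c j) ∧ ∀ i j, Adjd G i j → i = c ∨ j = c

/-- A corona digraph: a simple symmetric digraph in which each non-pendant vertex is
adjacent to exactly one pendant vertex. -/
def IsCorona {n : ℕ} (G : Fin n → Fin n → Prop) : Prop :=
  IsSSD G ∧ ∀ i, ¬ Pendant G i → ∃! j, Adjd G i j ∧ Pendant G j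

/-- 𝕄(i): the maximum matchings in which vertex `i` is matched. -/
noncomputable def MMi {n : ℕ} (A : Matrix (Fin n) (Fin n) ℝ) (i : Fin n) :
    Finset (Finset (Sym2 (Fin n))) :=
  {M | IsMaxMatching (DA A) M ∧ ∃ e ∈ M, i ∈ e}.toFinite.toFinset

/-! An edge `xy` of a maximum matching has a pendant endpoint: otherwise, in the class 𝒟,
`x` and `y` have distinct pendant neighbours `p` and `q`, which a maximum matching leaves
unmatched, and `p x y q` is an augmenting path. On an alternating chain `i a b j` of length
three the inner vertices `a`, `b` have two neighbours each, so the matched edges `ia` and `bj`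
force `i` and `j` to be pendant. -/

section Digraph

variable {n : ℕ} {G : Fin n → Fin n → Prop}

theorem Adjd.symm {i j : Fin n} (h : Adjd G i j) : Adjd G j i :=
  ⟨h.1.symm, h.2.2, h.2.1⟩

theorem not_pendant_of_adjd_of_adjd {a u v : Fin n} (hu : Adjd G a u) (hv : Adjd G a v)
    (huv : u ≠ v) : ¬ Pendant G a :=
  fun hp => huv (hp.unique hu hv)

def Unsaturated (M : Finset (Sym2 (Fin n))) (v : Fin n) : Prop :=
  ∀ f ∈ M, v ∉ f

namespace IsMatching

variable {M : Finset (Sym2 (Fin n))}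

theorem adjd_of_mem (hM : IsMatching G M) {x y : Fin n} (he : s(x, y) ∈ M) : Adjd G x y := by
  obtain ⟨u, v, huv, hadj⟩ := hM.1 _ he
  rcases Sym2.eq_iff.1 huv with ⟨rfl, rfl⟩ | ⟨rfl, rfl⟩
  · exact hadj
  · exact hadj.symm

theorem of_subset {M' : Finset (Sym2 (Fin n))} (hM : IsMatching G M) (h : M' ⊆ M) :
    IsMatching G M' :=
  ⟨fun e he => hM.1 e (h he), fun e he f hf => hM.2 e (h he) f (h hf)⟩

theorem insert (hM : IsMatching G M) {e : Sym2 (Fin n)} (he : IsEdge G e)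
    (hd : ∀ v ∈ e, Unsaturated M v) : IsMatching G (insert e M) := by
  refine ⟨fun f hf => ?_, fun a ha b hb hab v hva => ?_⟩
  · rcases Finset.mem_insert.1 hf with rfl | hf
    exacts [he, hM.1 f hf]
  rcases Finset.mem_insert.1 ha with rfl | haM <;> rcases Finset.mem_insert.1 hb with rfl | hbM
  · exact absurd rfl hab
  · exact hd v hva b hbM
  · exact fun hvb => hd v hvb a haM hva
  · exact hM.2 a haM b hbM hab v hva

theorem unsaturated_of_pendant (hM : IsMatching G M) {e : Sym2 (Fin n)} (he : e ∈ M)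
    {x p : Fin n} (hx : x ∈ e) (hp : Pendant G p) (hpx : Adjd G p x) (hpe : p ∉ e) :
    Unsaturated M p := by
  intro f hf hpf
  obtain ⟨u, v, rfl, huv⟩ := hM.1 f hf
  have hxf : x ∉ s(u, v) := hM.2 e he _ hf (fun h => hpe (h ▸ hpf)) x hx
  rcases Sym2.mem_iff.1 hpf with rfl | rfl
  · exact hxf (hp.unique hpx huv ▸ Sym2.mem_mk_right _ _)
  · exact hxf (hp.unique hpx huv.symm ▸ Sym2.mem_mk_left _ _)

end IsMatching

/-- Otherwise `p x y q` would be an augmenting path. -/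
theorem IsMaxMatching.eq_of_unsaturated {M : Finset (Sym2 (Fin n))} (hM : IsMaxMatching G M)
    {x y p q : Fin n} (he : s(x, y) ∈ M) (hpx : Adjd G p x) (hqy : Adjd G q y)
    (hp : Unsaturated M p) (hq : Unsaturated M q) : p = q := by
  by_contra hpq
  have hxy : x ≠ y := (hM.1.adjd_of_mem he).1
  have hpy : p ≠ y := by rintro rfl; exact hp _ he (Sym2.mem_mk_right x p)
  have hqx : q ≠ x := by rintro rfl; exact hq _ he (Sym2.mem_mk_left q y)
  have hx_off : ∀ v ∈ s(x, y), Unsaturated (M.erase s(x, y)) v := fun v hv f hf =>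
    hM.1.2 _ he f (Finset.mem_of_mem_erase hf) (Finset.ne_of_mem_erase hf).symm v hv
  set M₀ := M.erase s(x, y)
  have hM₀ : IsMatching G M₀ := hM.1.of_subset (Finset.erase_subset _ _)
  have hp₀ : Unsaturated M₀ p := fun f hf => hp f (Finset.mem_of_mem_erase hf)
  have hq₀ : Unsaturated M₀ q := fun f hf => hq f (Finset.mem_of_mem_erase hf)
  have hM₁ : IsMatching G (insert s(q, y) M₀) := by
    refine hM₀.insert ⟨q, y, rfl, hqy⟩ fun v hv => ?_
    rcases Sym2.mem_iff.1 hv with rfl | rfl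
    exacts [hq₀, hx_off v (Sym2.mem_mk_right x v)]
  have hpx_off : ∀ v ∈ s(p, x), Unsaturated (insert s(q, y) M₀) v := by
    intro v hv f hf
    rcases Finset.mem_insert.1 hf with rfl | hf
    · simp only [Sym2.mem_iff, not_or]
      rcases Sym2.mem_iff.1 hv with rfl | rfl
      exacts [⟨hpq, hpy⟩, ⟨Ne.symm hqx, hxy⟩]
    · rcases Sym2.mem_iff.1 hv with rfl | rfl
      exacts [hp₀ f hf, hx_off v (Sym2.mem_mk_left v y) f hf]
  have hM₂ : IsMatching G (insert s(p, x) (insert s(q, y) M₀)) :=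
    hM₁.insert ⟨p, x, rfl, hpx⟩ hpx_off
  have hcard : (insert s(p, x) (insert s(q, y) M₀)).card = M.card + 1 := by
    rw [Finset.card_insert_of_notMem fun h => hpx_off p (Sym2.mem_mk_left p x) _ h
        (Sym2.mem_mk_left p x),
      Finset.card_insert_of_notMem fun h => hq₀ _ h (Sym2.mem_mk_left q y),
      Finset.card_erase_of_mem he, Nat.sub_add_cancel (Finset.card_pos.2 ⟨_, he⟩)]
  have := hM.2 _ hM₂
  omega

theorem InClassD.pendant_or_pendant_of_mem {M : Finset (Sym2 (Fin n))} (hD : InClassD G)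
    (hM : IsMaxMatching G M) {x y : Fin n} (he : s(x, y) ∈ M) : Pendant G x ∨ Pendant G y := by
  by_contra! ⟨hx, hy⟩
  obtain ⟨p, hxp, hp⟩ := hD.2 x hx
  obtain ⟨q, hyq, hq⟩ := hD.2 y hy
  have hp_off : p ∉ s(x, y) := by
    rw [Sym2.mem_iff]; rintro (rfl | rfl)
    exacts [hxp.1 rfl, hy hp]
  have hq_off : q ∉ s(x, y) := by
    rw [Sym2.mem_iff]; rintro (rfl | rfl)
    exacts [hx hq, hyq.1 rfl]
  have hpq : p = q := hM.eq_of_unsaturated he hxp.symm hyq.symm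
    (hM.1.unsaturated_of_pendant he (Sym2.mem_mk_left x y) hp hxp.symm hp_off)
    (hM.1.unsaturated_of_pendant he (Sym2.mem_mk_right x y) hq hyq.symm hq_off)
  subst hpq
  exact (hM.1.adjd_of_mem he).1 (hp.unique hxp.symm hyq.symm)

end Digraph

section CycleChain

variable {n : ℕ} {G : Fin n → Fin n → Prop} {i j : Fin n} {c : List (Fin n)}

theorem length_chainEdges (c : List (Fin n)) : (chainEdges c).length = c.length - 1 := by
  simp only [chainEdges, List.length_zipWith, List.length_tail]
  omega

theorem IsCycleChainBtw.eq_of_length_chainEdges_eq_one (hc : IsCycleChainBtw G i j c)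
    (h : (chainEdges c).length = 1) : c = [i, j] := by
  have hlen : c.length = 2 := by have := length_chainEdges c; omega
  obtain ⟨a, b, rfl⟩ := List.length_eq_two.1 hlen
  obtain ⟨-, hi, hj⟩ := hc
  simp_all

theorem IsCycleChainBtw.exists_eq_of_length_chainEdges_eq_three (hc : IsCycleChainBtw G i j c)
    (h : (chainEdges c).length = 3) : ∃ a b, c = [i, a, b, j] := by
  have hlen : c.length = 4 := by have := length_chainEdges c; omega
  obtain ⟨i', a, b, j', rfl⟩ := List.length_eq_four.1 hlen
  obtain ⟨-, hi, hj⟩ := hc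
  simp_all

end CycleChain

theorem alt_chain_endpoints_pendant_general {n : ℕ} (G : Fin n → Fin n → Prop)
    (hD : InClassD G)
    (M : Finset (Sym2 (Fin n))) (hM : IsMaxMatching G M)
    (i j : Fin n) (c : List (Fin n))
    (hc : IsCycleChainBtw G i j c) (ha : IsAltChain M c) :
    ((chainEdges c).length = 3 → Pendant G i ∧ Pendant G j) ∧
      ((chainEdges c).length = 1 → Pendant G i ∨ Pendant G j) := by
  refine ⟨fun h3 => ?_, fun h1 => ?_⟩
  · obtain ⟨a, b, rfl⟩ := hc.exists_eq_of_length_chainEdges_eq_three h3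
    obtain ⟨⟨hnd, -, hch⟩, -⟩ := hc
    simp only [List.nodup_cons, List.mem_cons, List.not_mem_nil] at hnd
    simp only [List.Chain', List.isChain_cons_cons, List.isChain_singleton] at hch
    obtain ⟨hia, hab, hbj, -⟩ := hch
    have hia_mem : s(i, a) ∈ M := (ha.2 0 (by omega)).2 Even.zero
    have hbj_mem : s(b, j) ∈ M := (ha.2 2 (by omega)).2 even_two
    have ha_np : ¬ Pendant G a := not_pendant_of_adjd_of_adjd hia.symm hab (by tauto)
    have hb_np : ¬ Pendant G b := not_pendant_of_adjd_of_adjd hab.symm hbj (by tauto)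
    exact ⟨(hD.pendant_or_pendant_of_mem hM hia_mem).resolve_right ha_np,
      (hD.pendant_or_pendant_of_mem hM hbj_mem).resolve_left hb_np⟩
  · obtain rfl := hc.eq_of_length_chainEdges_eq_one h1
    exact hD.pendant_or_pendant_of_mem hM ((ha.2 0 (by omega)).2 Even.zero)

/-- Remark 2.4: the endpoints of a length-3 alternating cycle chain are pendant vertices,
and a length-1 alternating cycle chain is a pendant 2-cycle. -/
theorem alt_chain_endpoints_pendant {n : ℕ} (G : Fin n → Fin n → Prop)
    (hD : InClassD G) (hSC : StronglyConnected G)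
    (M : Finset (Sym2 (Fin n))) (hM : IsMaxMatching G M)
    (i j : Fin n) (c : List (Fin n))
    (hc : IsCycleChainBtw G i j c) (ha : IsAltChain M c) :
    ((chainEdges c).length = 3 → Pendant G i ∧ Pendant G j) ∧
      ((chainEdges c).length = 1 → Pendant G i ∨ Pendant G j) :=
  alt_chain_endpoints_pendant_general G hD M hM i j c hc ha
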